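/- arXiv:1603.05717 — 7 statements merged into one kernel-verified Lean document; each statement's English description precedes it below -/
import Mathlib

section
/- Let r ≥ 2 and let H be an r-uniform hypergraph on n vertices with at most β·n^r edges, where β > 0 and n ≥ (1/2)·β^{-1/(r-1)}. Then H contains an independent set of size at least (1/4)·β^{-1/(r-1)}. -/
/-!
Let `c = β^{-1/(r-1)}` and `t = ⌊c/2⌋`. Some `t`-set `T` of vertices contains at most the average
number `|H|·C(t,r)/C(n,r) ≤ β t^r` of edges; deleting one vertex of each of them leaves an
independent set. As `β t^{r-1} = (t/c)^{r-1} ≤ t/c`, at most `t²/c` vertices are deleted. The real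
bound `t - t²/c` may fall short of `c/4` by up to `1/c`, but the number of deleted vertices is an
integer, and rounding it closes the gap.
-/

open Finset

def IsIndependent {α : Type*} (H : Finset (Finset α)) (S : Finset α) : Prop :=
  ∀ e ∈ H, ¬ e ⊆ S

theorem isIndependent_singleton {α : Type*} {H : Finset (Finset α)} (hH : ∀ e ∈ H, 2 ≤ #e)
    (v : α) : IsIndependent H {v} := fun e he hev => by
  have := card_le_card hev
  have := hH e he
  rw [card_singleton] at *
  omega

section Deletion

variable {α : Type*} [DecidableEq α]

theorem exists_isIndependent_subset_card_le_card_add (F : Finset (Finset α))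
    (hF : ∀ e ∈ F, e.Nonempty) (T : Finset α) :
    ∃ S ⊆ T, IsIndependent F S ∧ #T ≤ #S + #F := by
  induction F using Finset.induction_on with
  | empty => exact ⟨T, subset_rfl, by simp [IsIndependent], by simp⟩
  | insert e F he ih =>
    obtain ⟨S, hST, hS, hcard⟩ := ih fun f hf => hF f (mem_insert_of_mem hf)
    rw [card_insert_of_notMem he]
    by_cases heS : e ⊆ S
    · obtain ⟨x, hx⟩ := hF e (mem_insert_self e F)
      refine ⟨S.erase x, (erase_subset x S).trans hST, fun f hf hfS => ?_, ?_⟩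
      · rcases mem_insert.1 hf with rfl | hf
        · exact notMem_erase x S (hfS hx)
        · exact hS f hf (hfS.trans (erase_subset x S))
      · have := card_erase_add_one (heS hx)
        omega
    · refine ⟨S, hST, fun f hf => ?_, by omega⟩
      rcases mem_insert.1 hf with rfl | hf
      exacts [heS, hS f hf]

theorem exists_isIndependent_card_le_card_add (H : Finset (Finset α))
    (hH : ∀ e ∈ H, e.Nonempty) (T : Finset α) :
    ∃ S, IsIndependent H S ∧ #T ≤ #S + #{e ∈ H | e ⊆ T} := by
  obtain ⟨S, hST, hS, hcard⟩ := exists_isIndependent_subset_card_le_card_add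
    {e ∈ H | e ⊆ T} (fun e he => hH e (mem_filter.1 he).1) T
  exact ⟨S, fun e he heS => hS e (mem_filter.2 ⟨he, heS.trans hST⟩) heS, hcard⟩

end Deletion

theorem Nat.descFactorial_mul_pow_le {t n : ℕ} (htn : t ≤ n) (r : ℕ) :
    t.descFactorial r * n ^ r ≤ n.descFactorial r * t ^ r := by
  induction r with
  | zero => simp
  | succ r ih =>
    have hstep : (t - r) * n ≤ (n - r) * t := by
      rw [Nat.sub_mul, Nat.sub_mul, mul_comm n t]
      exact Nat.sub_le_sub_left (Nat.mul_le_mul_left r htn) _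
    rw [Nat.descFactorial_succ, Nat.descFactorial_succ, pow_succ, pow_succ]
    calc (t - r) * t.descFactorial r * (n ^ r * n)
        = (t - r) * n * (t.descFactorial r * n ^ r) := by ring
      _ ≤ (n - r) * t * (n.descFactorial r * t ^ r) := Nat.mul_le_mul hstep ih
      _ = (n - r) * n.descFactorial r * (t ^ r * t) := by ring

theorem Nat.choose_mul_pow_le {t n : ℕ} (htn : t ≤ n) (r : ℕ) :
    t.choose r * n ^ r ≤ n.choose r * t ^ r := by
  have h := Nat.descFactorial_mul_pow_le htn r
  rw [Nat.descFactorial_eq_factorial_mul_choose, Nat.descFactorial_eq_factorial_mul_choose,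
    mul_assoc, mul_assoc] at h
  exact Nat.le_of_mul_le_mul_left h (Nat.factorial_pos r)

section Averaging

variable {α : Type*} [Fintype α] [DecidableEq α]

theorem sum_card_filter_subset_powersetCard (H : Finset (Finset α)) {r t : ℕ}
    (hH : ∀ e ∈ H, #e = r) (hrt : r ≤ t) :
    ∑ T ∈ powersetCard t univ, #{e ∈ H | e ⊆ T}
      = #H * (Fintype.card α - r).choose (t - r) := by
  have hcount := sum_card_bipartiteAbove_eq_sum_card_bipartiteBelow (fun e T => e ⊆ T) (s := H)
    (t := powersetCard t (univ : Finset α))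
  simp only [bipartiteBelow] at hcount
  rw [← hcount]
  refine sum_const_nat fun e he => ?_
  rw [bipartiteAbove, card_filter_powersetCard_subset e univ t (subset_univ e) (hH e he ▸ hrt),
    card_univ, hH e he]

theorem exists_card_eq_card_filter_subset_mul_pow_le (H : Finset (Finset α)) {r t : ℕ}
    (hH : ∀ e ∈ H, #e = r) (htn : t ≤ Fintype.card α) :
    ∃ T : Finset α, #T = t ∧ #{e ∈ H | e ⊆ T} * Fintype.card α ^ r ≤ #H * t ^ r := by
  set n := Fintype.card α
  have hP : (powersetCard t (univ : Finset α)).Nonempty := powersetCard_nonempty.2 htn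
  rcases lt_or_ge t r with htr | hrt
  · obtain ⟨T, hT⟩ := hP
    refine ⟨T, (mem_powersetCard.1 hT).2, ?_⟩
    have hX : {e ∈ H | e ⊆ T} = ∅ := filter_eq_empty_iff.2 fun e he heT => by
      have := card_le_card heT
      rw [hH e he, (mem_powersetCard.1 hT).2] at this
      omega
    simp [hX]
  obtain ⟨T, hT, hmin⟩ := exists_min_image _ (fun T : Finset α => #{e ∈ H | e ⊆ T}) hP
  refine ⟨T, (mem_powersetCard.1 hT).2, ?_⟩
  set X := #{e ∈ H | e ⊆ T}
  have hXavg : X * n.choose t ≤ #H * (n - r).choose (t - r) := by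
    have := card_nsmul_le_sum _ _ _ hmin
    rwa [sum_card_filter_subset_powersetCard H hH hrt, card_powersetCard, card_univ, smul_eq_mul,
      mul_comm] at this
  have hXchoose : X * n.choose r ≤ #H * t.choose r := by
    refine Nat.le_of_mul_le_mul_right ?_ (Nat.choose_pos (Nat.sub_le_sub_right htn r))
    calc X * n.choose r * (n - r).choose (t - r) = X * n.choose t * t.choose r := by
          rw [mul_assoc, ← Nat.choose_mul hrt, mul_assoc]
      _ ≤ #H * (n - r).choose (t - r) * t.choose r := Nat.mul_le_mul_right _ hXavg
      _ = #H * t.choose r * (n - r).choose (t - r) := by ring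
  refine Nat.le_of_mul_le_mul_right ?_ (Nat.choose_pos (hrt.trans htn))
  calc X * n ^ r * n.choose r = X * n.choose r * n ^ r := by ring
    _ ≤ #H * t.choose r * n ^ r := Nat.mul_le_mul_right _ hXchoose
    _ ≤ #H * (n.choose r * t ^ r) := by
        rw [mul_assoc]; exact Nat.mul_le_mul_left _ (Nat.choose_mul_pow_le htn r)
    _ = #H * t ^ r * n.choose r := by ring

end Averaging

theorem exists_isIndependent_card_add_le {α : Type*} [Fintype α] [Nonempty α] [DecidableEq α]
    (H : Finset (Finset α)) {r t : ℕ} (hr : 1 ≤ r) (hH : ∀ e ∈ H, #e = r) {β : ℝ}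
    (hedges : (#H : ℝ) ≤ β * Fintype.card α ^ r) (htn : t ≤ Fintype.card α) :
    ∃ S, IsIndependent H S ∧ ∃ X : ℕ, (X : ℝ) ≤ β * t ^ r ∧ t ≤ #S + X := by
  obtain ⟨T, rfl, hT⟩ := exists_card_eq_card_filter_subset_mul_pow_le H hH htn
  obtain ⟨S, hS, hST⟩ := exists_isIndependent_card_le_card_add H
    (fun e he => card_pos.1 (by rw [hH e he]; omega)) T
  refine ⟨S, hS, _, ?_, hST⟩
  have hn : (0 : ℝ) < Fintype.card α ^ r := by positivity
  have hT' : (#{e ∈ H | e ⊆ T} : ℝ) * Fintype.card α ^ r ≤ #H * #T ^ r := by exact_mod_cast hT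
  refine le_of_mul_le_mul_right (hT'.trans ?_) hn
  calc (#H : ℝ) * #T ^ r ≤ β * Fintype.card α ^ r * #T ^ r := by gcongr
    _ = β * #T ^ r * Fintype.card α ^ r := by ring

theorem Real.rpow_neg_inv_natCast_pow {x : ℝ} (hx : 0 ≤ x) {k : ℕ} (hk : k ≠ 0) :
    (x ^ (-(k : ℝ)⁻¹)) ^ k = x⁻¹ := by
  rw [Real.rpow_neg hx, inv_pow, Real.rpow_inv_natCast_pow hx hk]

theorem mul_le_sq_of_le_mul_pow {X β c t : ℝ} {r : ℕ} (hr : 2 ≤ r) (ht : 0 ≤ t) (hc : 0 < c)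
    (htc : t ≤ c) (hcβ : c ^ (r - 1) = β⁻¹) (hX : X ≤ β * t ^ r) : X * c ≤ t ^ 2 := by
  have hβt : β * t ^ (r - 1) ≤ t / c := by
    calc β * t ^ (r - 1) = (t / c) ^ (r - 1) := by rw [div_pow, hcβ, div_inv_eq_mul, mul_comm]
      _ ≤ t / c := pow_le_of_le_one (by positivity) ((div_le_one hc).2 htc) (by omega)
  calc X * c ≤ β * t ^ r * c := by gcongr
    _ = β * t ^ (r - 1) * c * t := by
        rw [← Nat.sub_add_cancel (by omega : 1 ≤ r), pow_succ, Nat.add_sub_cancel]; ring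
    _ ≤ t / c * c * t := by gcongr
    _ = t ^ 2 := by field_simp

theorem add_div_four_le_of_mul_le_sq {X t : ℕ} {c : ℝ} (ht : 1 ≤ t) (hct : 2 * t ≤ c)
    (hc : c < 2 * t + 2) (hX : X * c ≤ t ^ 2) : X + c / 4 ≤ t := by
  have htpos : (0 : ℝ) < t := by exact_mod_cast ht
  have h2X : 2 * X ≤ t := by
    have : (2 * X : ℝ) * t ≤ t * t := by nlinarith [Nat.cast_nonneg (α := ℝ) X]
    exact_mod_cast le_of_mul_le_mul_right this htpos
  -- `2X ≤ t`, and in the extremal case `2X = t` the hypothesis forces `c = 2t`.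
  rcases (by omega : 2 * X + 1 ≤ t ∨ 2 * X = t) with h | h
  · have : (2 * X + 1 : ℝ) ≤ t := by exact_mod_cast h
    linarith
  · have h' : (2 * X : ℝ) = t := by exact_mod_cast h
    have : c ≤ 2 * t := by nlinarith
    linarith

/-- An `r`-uniform hypergraph `H` on vertex set `V` with at most `β·n^r` edges, where
`n ≥ (1/2)·β^(-1/(r-1))`, contains an independent set of size at least `(1/4)·β^(-1/(r-1))`. -/
theorem stmt0 {V : Type*} [Fintype V] [DecidableEq V] (r : ℕ) (hr : 2 ≤ r)
    (H : Finset (Finset V)) (hH : ∀ e ∈ H, e.card = r) (β : ℝ) (hβ : 0 < β)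
    (hedges : (H.card : ℝ) ≤ β * (Fintype.card V : ℝ) ^ r)
    (hn : (Fintype.card V : ℝ) ≥ (1 / 2) * β ^ (-(1 / ((r : ℝ) - 1)))) :
    ∃ S : Finset V, (∀ e ∈ H, ¬ e ⊆ S) ∧
      (S.card : ℝ) ≥ (1 / 4) * β ^ (-(1 / ((r : ℝ) - 1))) := by
  set c : ℝ := β ^ (-(1 / ((r : ℝ) - 1)))
  have hc : 0 < c := Real.rpow_pos_of_pos hβ _
  have hcβ : c ^ (r - 1) = β⁻¹ := by
    have hc_eq : c = β ^ (-((r - 1 : ℕ) : ℝ)⁻¹) := by rw [Nat.cast_pred (by omega), ← one_div]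
    rw [hc_eq, Real.rpow_neg_inv_natCast_pow hβ.le (by omega)]
  have hV : (0 : ℝ) < Fintype.card V := by linarith
  have : Nonempty V := Fintype.card_pos_iff.1 (by exact_mod_cast hV)
  rcases lt_or_ge c 2 with hc2 | hc2
  · obtain ⟨v⟩ := this
    refine ⟨{v}, isIndependent_singleton (fun e he => hH e he ▸ hr) v, ?_⟩
    rw [card_singleton, Nat.cast_one]
    linarith
  set t := ⌊c / 2⌋₊
  have htc : (t : ℝ) ≤ c / 2 := Nat.floor_le (by positivity)
  have hct : c / 2 < t + 1 := Nat.lt_floor_add_one _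
  have htn : t ≤ Fintype.card V := by exact_mod_cast (by linarith : (t : ℝ) ≤ Fintype.card V)
  obtain ⟨S, hS, X, hXβ, hST⟩ := exists_isIndependent_card_add_le H (by omega) hH hedges htn
  have hX := mul_le_sq_of_le_mul_pow hr t.cast_nonneg hc (by linarith) hcβ hXβ
  have hfew := add_div_four_le_of_mul_le_sq (Nat.le_floor (by push_cast; linarith)) (by linarith)
    (by linarith) hX
  have hST' : (t : ℝ) ≤ #S + X := by exact_mod_cast hST
  exact ⟨S, hS, by linarith⟩
end

section
/- If P ⊂ ℝ² is a set of n points in convex position, then every weak ε-approximant A for P with respect to the family of all convex sets satisfies |A| ≥ n(1/4 − ε/2). -/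
/-!
Call `p ∈ P` essential for `x` if `x ∉ conv (P \ {p})`. By Carathéodory, a point of `conv P` in
`ℝ^d` has at most `d + 1` essential points, so the points of `P` essential for some `a ∈ A` number
at most `(d + 1)|A|`. Let `B` be the remaining points. By convex position `P ∩ conv B = B`, while
every point of `A ∩ conv B` lies in `D = ⋂_{p ∈ P} conv (P \ {p})`, a convex set missing `P`.
Testing the approximant on `conv B` and on `D` gives `|B| ≤ 2ε|P|`, hence
`|P| ≤ (d + 1)|A| + 2ε|P|`, which for `d = 2` is stronger than the claim.
-/

open Finset Module

variable {E : Type*} [AddCommGroup E] [Module ℝ E]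

def IsWeakConvexApproximant (ε : ℝ) (P A : Finset E) : Prop :=
  ∀ C : Set E, Convex ℝ C →
    |((↑P ∩ C).ncard : ℝ) / #P - ((↑A ∩ C).ncard : ℝ) / #A| ≤ ε

open scoped Classical in
noncomputable def essentialPoints (s : Finset E) (x : E) : Finset E :=
  {p ∈ s | x ∉ convexHull ℝ ((s : Set E) \ {p})}

theorem mem_essentialPoints {s : Finset E} {x p : E} :
    p ∈ essentialPoints s x ↔ p ∈ s ∧ x ∉ convexHull ℝ ((s : Set E) \ {p}) := by
  classical
  simp [essentialPoints]

theorem card_essentialPoints_le [FiniteDimensional ℝ E] {s : Finset E} {x : E}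
    (hx : x ∈ convexHull ℝ (s : Set E)) : #(essentialPoints s x) ≤ finrank ℝ E + 1 := by
  rw [convexHull_eq_union] at hx
  simp only [Set.mem_iUnion] at hx
  obtain ⟨t, hts, hind, hxt⟩ := hx
  calc #(essentialPoints s x) ≤ #t := by
        refine card_le_card fun p hp => ?_
        by_contra hpt
        exact (mem_essentialPoints.1 hp).2
          (convexHull_mono (Set.subset_sdiff_singleton hts hpt) hxt)
    _ = Fintype.card t := (Fintype.card_coe t).symm
    _ ≤ finrank ℝ (vectorSpan ℝ (Set.range ((↑) : t → E))) + 1 := hind.card_le_finrank_succ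
    _ ≤ finrank ℝ E + 1 := by gcongr; exact Submodule.finrank_le _

theorem inter_convexHull_eq_of_notMem_convexHull_sdiff {P B : Finset E}
    (hconv : ∀ p ∈ P, p ∉ convexHull ℝ ((P : Set E) \ {p})) (hBP : B ⊆ P) :
    (P : Set E) ∩ convexHull ℝ (B : Set E) = B := by
  refine subset_antisymm (fun p ⟨hpP, hpB⟩ => ?_) fun p hp => ⟨hBP hp, subset_convexHull ℝ _ hp⟩
  by_contra hpB'
  exact hconv p hpP (convexHull_mono (Set.subset_sdiff_singleton (coe_subset.2 hBP) hpB') hpB)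

theorem IsWeakConvexApproximant.ncard_inter_le {ε : ℝ} {P A : Finset E}
    (h : IsWeakConvexApproximant ε P A) {C D : Set E} (hC : Convex ℝ C) (hD : Convex ℝ D)
    (hPD : Disjoint (P : Set E) D) (hAD : (A : Set E) ∩ C ⊆ D) :
    ((↑P ∩ C).ncard : ℝ) ≤ 2 * ε * #P := by
  have hmassC := (le_abs_self _).trans (h C hC)
  have hmassD : ((↑A ∩ D).ncard : ℝ) / #A ≤ ε := by
    have := h D hD
    rwa [hPD.inter_eq, Set.ncard_empty, Nat.cast_zero, zero_div, zero_sub, abs_neg,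
      abs_of_nonneg (by positivity)] at this
  have hCD : ((↑A ∩ C).ncard : ℝ) / #A ≤ ((↑A ∩ D).ncard : ℝ) / #A := by
    gcongr ?_ / _
    exact_mod_cast Set.ncard_le_ncard (Set.subset_inter Set.inter_subset_left hAD)
      (A.finite_toSet.inter_of_left D)
  have hPC : ((↑P ∩ C).ncard : ℝ) ≤ #P := by
    exact_mod_cast (Set.ncard_le_ncard Set.inter_subset_left).trans (Set.ncard_coe_finset P).le
  calc ((↑P ∩ C).ncard : ℝ) = (↑P ∩ C).ncard / #P * #P :=
        (div_mul_cancel_of_imp fun h0 => le_antisymm (h0 ▸ hPC) (by positivity)).symm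
    _ ≤ 2 * ε * #P := by gcongr; linarith

theorem card_le_of_isWeakConvexApproximant [FiniteDimensional ℝ E] {ε : ℝ} {P A : Finset E}
    (hconv : ∀ p ∈ P, p ∉ convexHull ℝ ((P : Set E) \ {p}))
    (h : IsWeakConvexApproximant ε P A) :
    (#P : ℝ) ≤ (finrank ℝ E + 1) * #A + 2 * ε * #P := by
  classical
  set G := {a ∈ A | a ∈ convexHull ℝ (P : Set E)}.biUnion (essentialPoints P)
  set B := P \ G
  have hG : #G ≤ (finrank ℝ E + 1) * #A :=
    calc #G ≤ ∑ a ∈ A with a ∈ convexHull ℝ (P : Set E), #(essentialPoints P a) := card_biUnion_le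
      _ ≤ #{a ∈ A | a ∈ convexHull ℝ (P : Set E)} • (finrank ℝ E + 1) :=
        sum_le_card_nsmul _ _ _ fun a ha => card_essentialPoints_le (mem_filter.1 ha).2
      _ ≤ (finrank ℝ E + 1) * #A := by rw [smul_eq_mul, mul_comm]; gcongr; exact filter_subset _ _
  have hB : (#B : ℝ) ≤ 2 * ε * #P := by
    set D := ⋂ p ∈ P, convexHull ℝ ((P : Set E) \ {p})
    have hPD : Disjoint (P : Set E) D := Set.disjoint_left.2 fun p hp hpD =>
      hconv p hp (Set.mem_iInter₂.1 hpD p hp)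
    have hAD : (A : Set E) ∩ convexHull ℝ (B : Set E) ⊆ D := by
      rintro x ⟨hxA, hxB⟩
      refine Set.mem_iInter₂.2 fun p hp => ?_
      by_contra hx
      have hpG : p ∈ G := mem_biUnion.2
        ⟨x, mem_filter.2 ⟨hxA, convexHull_mono (coe_subset.2 sdiff_subset) hxB⟩,
          mem_essentialPoints.2 ⟨hp, hx⟩⟩
      exact hx (convexHull_mono (Set.subset_sdiff_singleton (coe_subset.2 sdiff_subset)
        fun hpB => (mem_sdiff.1 hpB).2 hpG) hxB)
    have := h.ncard_inter_le (convex_convexHull ℝ _)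
      (convex_iInter₂ fun _ _ => convex_convexHull ℝ _) hPD hAD
    rwa [inter_convexHull_eq_of_notMem_convexHull_sdiff hconv sdiff_subset,
      Set.ncard_coe_finset] at this
  have hPGB : (#P : ℝ) ≤ #B + #G := by exact_mod_cast card_le_card_sdiff_add_card
  have hG' : (#G : ℝ) ≤ (finrank ℝ E + 1) * #A := by exact_mod_cast hG
  linarith

theorem stmt3_general (P : Finset (Fin 2 → ℝ))
    (hconv : ∀ p ∈ P, p ∉ convexHull ℝ ((↑P : Set (Fin 2 → ℝ)) \ {p}))
    (ε : ℝ) (A : Finset (Fin 2 → ℝ))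
    (happrox : ∀ C : Set (Fin 2 → ℝ), Convex ℝ C →
      |(((↑P : Set (Fin 2 → ℝ)) ∩ C).ncard : ℝ) / P.card
        - (((↑A : Set (Fin 2 → ℝ)) ∩ C).ncard : ℝ) / A.card| ≤ ε) :
    (A.card : ℝ) ≥ P.card * (1 / 4 - ε / 2) := by
  have key := card_le_of_isWeakConvexApproximant hconv happrox
  rw [finrank_fin_fun, Nat.cast_ofNat] at key
  have hP : (0 : ℝ) ≤ #P := by positivity
  rcases le_total ε (1 / 2) with hε | hε <;> nlinarith [mul_nonneg hP (sub_nonneg.2 hε)]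

/-- If `P ⊂ ℝ²` is a set of `n` points in convex position, then every weak
ε-approximant `A` for `P` with respect to the family of convex sets satisfies
`|A| ≥ n(1/4 − ε/2)`. -/
theorem stmt3 (P : Finset (Fin 2 → ℝ)) (hP : P.Nonempty)
    (hconv : ∀ p ∈ P, p ∉ convexHull ℝ ((↑P : Set (Fin 2 → ℝ)) \ {p}))
    (ε : ℝ) (hε : 0 < ε) (A : Finset (Fin 2 → ℝ))
    (happrox : ∀ C : Set (Fin 2 → ℝ), Convex ℝ C →
      |(((↑P : Set (Fin 2 → ℝ)) ∩ C).ncard : ℝ) / P.card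
        - (((↑A : Set (Fin 2 → ℝ)) ∩ C).ncard : ℝ) / A.card| ≤ ε) :
    (A.card : ℝ) ≥ P.card * (1 / 4 - ε / 2) :=
  stmt3_general P hconv ε A happrox
end

section
/- Let P = (p_1, …, p_n) be an orientation-homogeneous sequence of points in ℝ^d, let I ⊂ [n] with |I| = d, and let H be the hyperplane spanned by the points {p_i : i ∈ I}. Then for indices j < j' in [n] \ I, the points p_j and p_{j'} lie on the same side of H if and only if |[j, j'] ∩ I| is even. -/
/-- The determinant of the `(d+1)×(d+1)` matrix whose rows are the points `p i`
augmented with a final coordinate `1`. Its sign is the orientation of the tuple. -/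
noncomputable def orientDet {d : ℕ} (p : Fin (d + 1) → (Fin d → ℝ)) : ℝ :=
  Matrix.det (Matrix.of fun i j : Fin (d + 1) =>
    if h : (j : ℕ) < d then p i ⟨j, h⟩ else 1)

/-- A sequence of points in `ℝ^d` is orientation-homogeneous if all its `(d+1)`-tuples,
taken in sequence order, have the same nonzero orientation. -/
def IsOrientHomog {d n : ℕ} (p : Fin n → (Fin d → ℝ)) : Prop :=
  ∃ s : ℝ, s ≠ 0 ∧ ∀ f : Fin (d + 1) → Fin n, StrictMono f →
    Real.sign (orientDet (p ∘ f)) = s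

/-!
Insert `p j` into the increasing tuple `p ∘ g` at its position `m = #{k | g k < j}`: the result
is an increasing `(d+1)`-tuple of `P`, so its orientation is the common sign `s`. Moving `p j`
from slot `m` to the last slot is a cycle of length `d + 1 - m`, hence the orientation of
`(p ∘ g, p j)` is `(-1) ^ (d - m) * s`. From `j` to `j'` the position `m` grows by
`#([j, j'] ∩ range g)`.
-/

open Finset

lemma Fin.comp_insertNth {α β : Type*} {n : ℕ} (f : α → β) (i : Fin (n + 1)) (x : α)
    (q : Fin n → α) : f ∘ Fin.insertNth i x q = Fin.insertNth i (f x) (f ∘ q) :=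
  Fin.eq_insertNth_iff.2 ⟨by simp, by ext; simp [Fin.removeNth]⟩

lemma Fin.insertNth_comp_cycleIcc_last {α : Type*} {n : ℕ} (i : Fin (n + 1)) (x : α)
    (q : Fin n → α) : Fin.insertNth i x q ∘ Fin.cycleIcc i (Fin.last n) = Fin.snoc q x := by
  funext k
  induction k using Fin.lastCases with
  | last => simp [Fin.cycleIcc_of_last (Fin.le_last i)]
  | cast k =>
    have := congrFun (Fin.cycleIcc_comp_succAbove i (Fin.last n) (Fin.le_last i)) k
    simp only [Function.comp_apply, Fin.succAbove_last] at this
    simp [this]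

lemma Real.sign_neg_one_pow_mul (e : ℕ) (x : ℝ) :
    Real.sign ((-1) ^ e * x) = (-1) ^ e * Real.sign x := by
  induction e with
  | zero => simp
  | succ e ih =>
    rw [pow_succ, mul_comm _ (-1 : ℝ), mul_assoc, neg_one_mul, Real.sign_neg, ih]
    ring

variable {d : ℕ}

lemma Monotone.lt_card_filter_lt_iff {α : Type*} [LinearOrder α] {g : Fin d → α}
    (hg : Monotone g) (a : α) (k : Fin d) : (k : ℕ) < #{k | g k < a} ↔ g k < a := by
  constructor
  · intro hk
    by_contra! hak
    have hsub : ({k' | g k' < a} : Finset _) ⊆ Iio k := fun k' hk' => by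
      simp only [mem_filter, mem_univ, true_and] at hk'
      exact mem_Iio.2 (lt_of_not_ge fun h => (hk'.trans_le hak).not_ge (hg h))
    have := card_le_card hsub
    rw [Fin.card_Iio] at this
    omega
  · intro hk
    have hsub : Iic k ⊆ ({k' | g k' < a} : Finset _) := fun k' hk' => by
      simpa using (hg (mem_Iic.1 hk')).trans_lt hk
    have := card_le_card hsub
    rw [Fin.card_Iic] at this
    omega

lemma StrictMono.strictMono_insertNth {α : Type*} [LinearOrder α] {g : Fin d → α}
    (hg : StrictMono g) {a : α} (ha : a ∉ Set.range g) {i : Fin (d + 1)}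
    (hi : (i : ℕ) = #{k | g k < a}) : StrictMono (Fin.insertNth i a g) := by
  have hlt (k : Fin d) : (k : ℕ) < i ↔ g k < a := hi ▸ hg.monotone.lt_card_filter_lt_iff a k
  refine (Fin.strictMono_insertNth_iff i a g).2 ⟨hg, fun k hk => (hlt k).1 hk, fun k hk => ?_⟩
  have hak : a ≤ g k := not_lt.1 fun h => (Fin.le_def.1 hk).not_gt ((hlt k).2 h)
  exact hak.lt_of_ne fun h => ha ⟨k, h.symm⟩

lemma card_filter_lt_add_card_filter_mem_range {α : Type*} [LinearOrder α]
    [LocallyFiniteOrder α] {g : Fin d → α} (hg : Function.Injective g) {a b : α} (hab : a ≤ b)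
    (hb : b ∉ Set.range g) :
    #{k | g k < a} + #((Icc a b).filter fun x => ∃ k, g k = x) = #{k | g k < b} := by
  have himage : (Icc a b).filter (fun x => ∃ k, g k = x) = image g {k | g k ∈ Icc a b} := by
    ext x
    simp only [mem_filter, mem_image, mem_univ, true_and]
    constructor
    · rintro ⟨hx, k, rfl⟩
      exact ⟨k, hx, rfl⟩
    · rintro ⟨k, hk, rfl⟩
      exact ⟨hk, k, rfl⟩
  have hdisj : Disjoint ({k | g k < a} : Finset (Fin d)) ({k | g k ∈ Icc a b} : Finset _) :=
    disjoint_filter.2 fun k _ hk hk' => (mem_Icc.1 hk').1.not_gt hk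
  have hunion : ({k | g k < a} : Finset (Fin d)) ∪ ({k | g k ∈ Icc a b} : Finset _) =
      ({k | g k < b} : Finset _) := by
    ext k
    simp only [mem_union, mem_filter, mem_univ, true_and, mem_Icc]
    constructor
    · rintro (hk | ⟨-, hk⟩)
      · exact hk.trans_le hab
      · exact hk.lt_of_ne fun h => hb ⟨k, h⟩
    · intro hk
      exact (lt_or_ge (g k) a).imp_right fun h => ⟨h, hk.le⟩
  rw [himage, card_image_of_injective _ hg, ← card_union_of_disjoint hdisj, hunion]

lemma orientDet_comp_perm (q : Fin (d + 1) → Fin d → ℝ) (σ : Equiv.Perm (Fin (d + 1))) :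
    orientDet (q ∘ σ) = Equiv.Perm.sign σ * orientDet q := by
  simpa [orientDet, Matrix.submatrix] using Matrix.det_permute σ
    (Matrix.of fun i j : Fin (d + 1) => if h : (j : ℕ) < d then q i ⟨j, h⟩ else 1)

lemma orientDet_snoc (q : Fin d → Fin d → ℝ) (x : Fin d → ℝ) (i : Fin (d + 1)) :
    orientDet (Fin.snoc q x) = (-1) ^ (d - i : ℕ) * orientDet (Fin.insertNth i x q) := by
  rw [← Fin.insertNth_comp_cycleIcc_last, orientDet_comp_perm,
    Fin.sign_cycleIcc_of_le (Fin.le_last i)]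
  simp

lemma sign_orientDet_snoc {n : ℕ} {p : Fin n → Fin d → ℝ} {s : ℝ}
    (hhom : ∀ f : Fin (d + 1) → Fin n, StrictMono f → Real.sign (orientDet (p ∘ f)) = s)
    {g : Fin d → Fin n} (hg : StrictMono g) {j : Fin n} (hj : j ∉ Set.range g) :
    Real.sign (orientDet (Fin.snoc (p ∘ g) (p j))) = (-1) ^ (d - #{k | g k < j}) * s := by
  have hpos : #{k | g k < j} < d + 1 :=
    Nat.lt_succ_of_le ((card_filter_le _ _).trans_eq (card_fin d))
  rw [orientDet_snoc _ _ ⟨_, hpos⟩, ← Fin.comp_insertNth, Real.sign_neg_one_pow_mul,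
    hhom _ (hg.strictMono_insertNth hj rfl)]

/-- Let `P` be orientation-homogeneous, let `I` (enumerated by the strictly monotone `g`)
be a set of `d` indices spanning the hyperplane `H`, and let `j < j'` be indices outside
`I`.  Then `p j` and `p j'` lie on the same side of `H` (as measured by the orientation
of the `d` spanning points together with the extra point) if and only if
`[j, j'] ∩ I` has even size. -/
theorem stmt4 (d n : ℕ) (p : Fin n → (Fin d → ℝ)) (hp : IsOrientHomog p)
    (g : Fin d → Fin n) (hg : StrictMono g)
    (j j' : Fin n) (hjj' : j < j')
    (hj : j ∉ Set.range g) (hj' : j' ∉ Set.range g) :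
    Real.sign (orientDet (Fin.snoc (p ∘ g) (p j)))
        = Real.sign (orientDet (Fin.snoc (p ∘ g) (p j'))) ↔
      Even ((Finset.Icc j j').filter (fun i => ∃ k, g k = i)).card := by
  obtain ⟨s, hs, hhom⟩ := hp
  set c := #((Icc j j').filter fun i => ∃ k, g k = i)
  have hcard : #{k | g k < j} + c = #{k | g k < j'} :=
    card_filter_lt_add_card_filter_mem_range hg.injective hjj'.le hj'
  have hle : #{k | g k < j'} ≤ d := (card_filter_le _ _).trans_eq (card_fin d)
  have hexp : d - #{k | g k < j} = d - #{k | g k < j'} + c := by omega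
  rw [sign_orientDet_snoc hhom hg hj, sign_orientDet_snoc hhom hg hj', hexp, pow_add, mul_assoc,
    mul_right_inj' (pow_ne_zero _ (by norm_num)), mul_eq_right₀ hs,
    neg_one_pow_eq_one_iff_even (by norm_num)]
end

section
/- Let P = (p_1, …, p_n) be an orientation-homogeneous sequence of points in ℝ^d and let I = {i_1 < i_2 < ⋯ < i_{d+2}} ⊆ [n]. Split I into I_odd = {i_1, i_3, …} and I_even = {i_2, i_4, …}. Then the convex hulls of {p_i : i ∈ I_odd} and {p_i : i ∈ I_even} intersect. -/
/-!
Laplace expansion of the `(d+2)×(d+2)` determinant whose rows are the augmented points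
`(q_k, 1)` of `I`, with one column repeated, gives the affine dependence
`∑ (-1)^k D_k • (q_k, 1) = 0`, where `D_k` is the orientation determinant of `I` without its
`k`-th point. Orientation-homogeneity gives all `D_k` the same sign, so the coefficients
alternate in sign, and as in Radon's theorem the dependence exhibits a common point of the
convex hulls of the positively and the negatively weighted points.
-/

open Finset

theorem Matrix.sum_neg_one_pow_mul_det_submatrix_succAbove_mul_eq_zero {R : Type*} [CommRing R]
    {m : ℕ} (A : Matrix (Fin (m + 1)) (Fin m) R) (k : Fin m) :
    ∑ i : Fin (m + 1), (-1) ^ (i : ℕ) * (A.submatrix i.succAbove id).det * A i k = 0 := by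
  set B : Matrix (Fin (m + 1)) (Fin (m + 1)) R := Matrix.of fun i => Fin.cons (A i k) (A i)
  have hB : B.det = 0 :=
    Matrix.det_zero_of_column_eq (Fin.succ_ne_zero k).symm fun i => by simp [B]
  have hminor (i : Fin (m + 1)) :
      B.submatrix i.succAbove Fin.succ = A.submatrix i.succAbove id := by
    ext; simp [B]
  rw [Matrix.det_succ_column_zero] at hB
  simpa [B, hminor, mul_right_comm] using hB

theorem Finset.centerMass_mem_convexHull_inter_of_sum_eq_zero {𝕜 E ι : Type*} [Field 𝕜]
    [LinearOrder 𝕜] [IsStrictOrderedRing 𝕜] [AddCommGroup E] [Module 𝕜 E] [Fintype ι]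
    [DecidableEq ι] {w : ι → 𝕜} {q : ι → E} {I : Finset ι} (hw : ∑ i, w i = 0)
    (hwq : ∑ i, w i • q i = 0) (hpos : ∀ i ∈ I, 0 < w i) (hnonpos : ∀ i ∉ I, w i ≤ 0)
    (hI : I.Nonempty) :
    I.centerMass w q ∈ convexHull 𝕜 (q '' I) ∩ convexHull 𝕜 (q '' ↑Iᶜ) := by
  have hIw : 0 < ∑ i ∈ I, w i := sum_pos hpos hI
  have hcompl : Iᶜ.centerMass w q = I.centerMass w q :=
    centerMass_of_sum_add_sum_eq_zero (by rwa [sum_compl_add_sum])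
      (by rwa [sum_compl_add_sum])
  refine ⟨I.centerMass_mem_convexHull (fun i hi => (hpos i hi).le) hIw
    (fun i hi => Set.mem_image_of_mem q hi), ?_⟩
  rw [← hcompl]
  refine Iᶜ.centerMass_mem_convexHull_of_nonpos (fun i hi => hnonpos i (mem_compl.mp hi)) ?_
    (fun i hi => Set.mem_image_of_mem q hi)
  linarith [sum_compl_add_sum I w]

noncomputable def cofactorWeight {d : ℕ} (q : Fin (d + 2) → Fin d → ℝ) (i : Fin (d + 2)) : ℝ :=
  (-1) ^ (i : ℕ) * orientDet (q ∘ i.succAbove)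

theorem sum_cofactorWeight_mul_augment {d : ℕ} (q : Fin (d + 2) → Fin d → ℝ) (k : Fin (d + 1)) :
    ∑ i, cofactorWeight q i * (if h : (k : ℕ) < d then q i ⟨k, h⟩ else 1) = 0 :=
  Matrix.sum_neg_one_pow_mul_det_submatrix_succAbove_mul_eq_zero
    (Matrix.of fun i (j : Fin (d + 1)) => if h : (j : ℕ) < d then q i ⟨j, h⟩ else 1) k

theorem sum_cofactorWeight {d : ℕ} (q : Fin (d + 2) → Fin d → ℝ) :
    ∑ i, cofactorWeight q i = 0 := by
  simpa using sum_cofactorWeight_mul_augment q (Fin.last d)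

theorem sum_cofactorWeight_smul {d : ℕ} (q : Fin (d + 2) → Fin d → ℝ) :
    ∑ i, cofactorWeight q i • q i = 0 := by
  ext j
  simpa using sum_cofactorWeight_mul_augment q j.castSucc

theorem IsOrientHomog.exists_forall_pos_mul_orientDet {d n : ℕ} {p : Fin n → Fin d → ℝ}
    (hp : IsOrientHomog p) :
    ∃ s : ℝ, ∀ f : Fin (d + 1) → Fin n, StrictMono f → 0 < s * orientDet (p ∘ f) := by
  obtain ⟨s, hs0, hs⟩ := hp
  refine ⟨s, fun f hf => ?_⟩
  rw [← hs f hf]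
  refine Real.sign_mul_pos_of_ne_zero _ fun h => hs0 ?_
  rw [← hs f hf, h, Real.sign_zero]

/-- If `P` is orientation-homogeneous and `I = {i_1 < ⋯ < i_{d+2}}` (enumerated by the
strictly monotone `g : Fin (d+2) → Fin n`), then the convex hulls of the points indexed
by the odd-numbered elements `i_1, i_3, …` (positions `0, 2, …` of `g`) and by the
even-numbered elements `i_2, i_4, …` (positions `1, 3, …` of `g`) intersect. -/
theorem stmt5 (d n : ℕ) (p : Fin n → (Fin d → ℝ)) (hp : IsOrientHomog p)
    (g : Fin (d + 2) → Fin n) (hg : StrictMono g) :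
    (convexHull ℝ {x | ∃ i : Fin (d + 2), Even (i : ℕ) ∧ x = p (g i)} ∩
      convexHull ℝ {x | ∃ i : Fin (d + 2), Odd (i : ℕ) ∧ x = p (g i)}).Nonempty := by
  obtain ⟨s, hs⟩ := hp.exists_forall_pos_mul_orientDet
  set q := p ∘ g
  have hD (i : Fin (d + 2)) : 0 < s * orientDet (q ∘ i.succAbove) :=
    hs _ (hg.comp (Fin.strictMono_succAbove i))
  have hw (i : Fin (d + 2)) :
      s * cofactorWeight q i = (-1) ^ (i : ℕ) * (s * orientDet (q ∘ i.succAbove)) := by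
    rw [cofactorWeight]; ring
  have hmem := centerMass_mem_convexHull_inter_of_sum_eq_zero
    (I := univ.filter fun i => Even (i : ℕ)) (w := fun i => s * cofactorWeight q i) (q := q)
    (by rw [← mul_sum, sum_cofactorWeight, mul_zero])
    (by simp_rw [mul_smul, ← smul_sum, sum_cofactorWeight_smul, smul_zero])
    (fun i hi => by simpa [hw, (mem_filter.mp hi).2.neg_one_pow] using hD i)
    (fun i hi => by
      rw [hw, (Nat.not_even_iff_odd.mp (by simpa using hi)).neg_one_pow]
      linarith [hD i])
    ⟨0, by simp⟩
  exact ⟨_, by convert hmem using 3 <;> ext x <;> simp [q, eq_comm]⟩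
end

section
/- Let d ≥ 1, let s = ⌊d/2⌋ + 1 and D = (s−1)(d+1) + 1. Let (p_1, …, p_{2D+1}) be an orientation-homogeneous sequence in ℝ^d, and let Q = {p_2, p_4, …, p_{2D}} and R = {p_1, p_3, …, p_{2D+1}}. Then any Tverberg point of Q with respect to s parts (i.e., any point lying in the intersection of the convex hulls of the s parts of some Tverberg partition of Q) lies in the convex hull of R. -/
/-!
Suppose `x` is not in the convex hull of `R`, and separate it by an affine functional `g` that is
negative on `R` and positive at `x`. Every colour class then contains a point where `g > 0`, so
`g` is positive at `s` or more odd-indexed points. Interleaving these with even-indexed points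
gives a subsequence of length `d + 2 ≤ 2s + 1` along which `g` alternates in sign. This is
impossible for an orientation-homogeneous sequence: expanding along its last column the
determinant of the rows `(q_k, 1, g(q_k))`, whose last column is a combination of the others,
gives `∑ₖ (-1)ᵏ g(q_k) · orientDet (q without q_k) = 0`, but all the terms would have the same
strict sign.
-/

open Finset

theorem orientDet_eq_det_snoc {d : ℕ} (p : Fin (d + 1) → Fin d → ℝ) :
    orientDet p = (Matrix.of fun i => (Fin.snoc (p i) 1 : Fin (d + 1) → ℝ)).det :=
  rfl

theorem sum_neg_one_pow_mul_orientDet_succAbove {d : ℕ} (q : Fin (d + 2) → Fin d → ℝ)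
    (f : (Fin d → ℝ) →ₗ[ℝ] ℝ) (u : ℝ) :
    ∑ k : Fin (d + 2), (-1 : ℝ) ^ (k : ℕ) * (f (q k) - u) * orientDet (q ∘ k.succAbove) = 0 := by
  set M : Matrix (Fin (d + 2)) (Fin (d + 2)) ℝ :=
    .of fun k => Fin.snoc (Fin.snoc (q k) 1 : Fin (d + 1) → ℝ) (f (q k) - u)
  have hM : M.det = 0 := by
    refine Matrix.exists_mulVec_eq_zero_iff.mp ⟨Fin.snoc
      (Fin.snoc (fun j => f fun i => if j = i then 1 else 0) (-u) : Fin (d + 1) → ℝ) (-1), ?_, ?_⟩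
    · exact fun h => by simpa using congrFun h (Fin.last _)
    · ext k
      simp only [M, Matrix.mulVec, dotProduct, Matrix.of_apply, f.pi_apply_eq_sum_univ (q k),
        smul_eq_mul, Fin.sum_univ_castSucc, Fin.snoc_castSucc, Fin.snoc_last, Pi.zero_apply]
      ring
  rw [Matrix.det_succ_column M (Fin.last _)] at hM
  have hminor : ∀ k : Fin (d + 2), (M.submatrix k.succAbove (Fin.last _).succAbove).det
      = orientDet (q ∘ k.succAbove) := by
    intro k
    rw [orientDet_eq_det_snoc, Fin.succAbove_last]
    congr 1
    ext i j
    simp [M]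
  simp only [hminor, M, Matrix.of_apply, Fin.snoc_last, Fin.val_last] at hM
  have hscaled : (-1 : ℝ) ^ (d + 1) *
      ∑ k : Fin (d + 2), (-1 : ℝ) ^ (k : ℕ) * (f (q k) - u) * orientDet (q ∘ k.succAbove) = 0 := by
    rw [mul_sum, ← hM]
    exact sum_congr rfl fun k _ => by ring
  exact (mul_eq_zero.mp hscaled).resolve_left (pow_ne_zero _ (by norm_num))

theorem IsOrientHomog.not_forall_neg_one_pow_mul_lt_zero {d n : ℕ} {p : Fin n → Fin d → ℝ}
    (hp : IsOrientHomog p) {m : Fin (d + 2) → Fin n} (hm : StrictMono m)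
    (f : (Fin d → ℝ) →ₗ[ℝ] ℝ) (u : ℝ) :
    ¬ ∀ k : Fin (d + 2), (-1 : ℝ) ^ (k : ℕ) * (f (p (m k)) - u) < 0 := by
  intro halt
  obtain ⟨ε, hε, hsign⟩ := hp
  have hdet : ∀ k : Fin (d + 2), 0 < ε * orientDet ((p ∘ m) ∘ k.succAbove) := by
    intro k
    have h := hsign (m ∘ k.succAbove) (hm.comp (Fin.strictMono_succAbove k))
    subst h
    exact Real.sign_mul_pos_of_ne_zero _ (fun h0 => hε (by rw [h0, Real.sign_zero]))
  have hzero : ∑ k : Fin (d + 2),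
      (-1 : ℝ) ^ (k : ℕ) * (f (p (m k)) - u) * orientDet ((p ∘ m) ∘ k.succAbove) = 0 :=
    sum_neg_one_pow_mul_orientDet_succAbove (p ∘ m) f u
  have hneg : ε * ∑ k : Fin (d + 2),
      (-1 : ℝ) ^ (k : ℕ) * (f (p (m k)) - u) * orientDet ((p ∘ m) ∘ k.succAbove) < 0 := by
    rw [mul_sum]
    exact sum_neg (fun k _ => by nlinarith [halt k, hdet k]) univ_nonempty
  rw [hzero, mul_zero] at hneg
  exact hneg.false

theorem strictMono_interleave {a : ℕ → ℕ} (ha : StrictMono a) (hodd : ∀ t, Odd (a t)) :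
    StrictMono fun k => a (k / 2) - 1 + k % 2 := by
  refine strictMono_nat_of_lt_succ fun k => ?_
  obtain ⟨t, rfl | rfl⟩ := Nat.even_or_odd' k
  · have h0 := Nat.odd_iff.mp (hodd t)
    simp only [show (2 * t + 1) / 2 = t by omega, show 2 * t / 2 = t by omega]
    omega
  · have h0 := Nat.odd_iff.mp (hodd t)
    have h1 := Nat.odd_iff.mp (hodd (t + 1))
    have hlt := ha (Nat.lt_add_one t)
    simp only [show (2 * t + 1 + 1) / 2 = t + 1 by omega, show (2 * t + 1) / 2 = t by omega]
    omega

theorem exists_strictMono_even_odd_pattern {n s : ℕ} (S : Finset (Fin (2 * n + 1)))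
    (hS : ∀ i ∈ S, Odd (i : ℕ)) (hs : s ≤ #S) :
    ∃ m : Fin (2 * s + 1) → Fin (2 * n + 1), StrictMono m ∧
      ∀ k : Fin (2 * s + 1), (Even (k : ℕ) → Even (m k : ℕ)) ∧ (Odd (k : ℕ) → m k ∈ S) := by
  obtain ⟨o, ho⟩ : ∃ o : Fin s ↪o Fin (2 * n + 1), ∀ t, o t ∈ S :=
    ⟨_, S.orderEmbOfCardLe_mem hs⟩
  have ho_odd : ∀ t, (o t : ℕ) % 2 = 1 := fun t => Nat.odd_iff.mp (hS _ (ho t))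
  -- `o` continued by odd numbers beyond `2 * n`, so that `m (2 * s) = 2 * n`
  set a : ℕ → ℕ := fun t => if h : t < s then o ⟨t, h⟩ else 2 * n + 1 + 2 * (t - s)
  have ha_of_lt : ∀ t (h : t < s), a t = o ⟨t, h⟩ := fun t h => dif_pos h
  have ha_of_ge : ∀ t, s ≤ t → a t = 2 * n + 1 + 2 * (t - s) := fun t h => dif_neg h.not_gt
  have ha_odd : ∀ t, Odd (a t) := by
    intro t
    rw [Nat.odd_iff]
    rcases lt_or_ge t s with h | h
    · rw [ha_of_lt t h]; exact ho_odd _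
    · rw [ha_of_ge t h]; omega
  have ha : StrictMono a := by
    refine strictMono_nat_of_lt_succ fun t => ?_
    rcases lt_or_ge (t + 1) s with h | h
    · rw [ha_of_lt t (by omega), ha_of_lt (t + 1) h]
      exact o.strictMono (Fin.mk_lt_mk.mpr (Nat.lt_add_one t))
    rcases lt_or_ge t s with h' | h'
    · rw [ha_of_lt t h', ha_of_ge (t + 1) h]
      have := (o ⟨t, h'⟩).is_lt
      omega
    · rw [ha_of_ge t h', ha_of_ge (t + 1) h]
      omega
  have hm_lt : ∀ k : Fin (2 * s + 1), a (k / 2) - 1 + k % 2 < 2 * n + 1 := by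
    intro k
    have hk := k.is_lt
    rcases lt_or_ge (k / 2 : ℕ) s with h | h
    · have := ho_odd ⟨k / 2, h⟩
      have := (o ⟨k / 2, h⟩).is_lt
      rw [ha_of_lt _ h]
      omega
    · rw [ha_of_ge _ h]
      omega
  refine ⟨fun k => ⟨a (k / 2) - 1 + k % 2, hm_lt k⟩,
    fun i j hij => strictMono_interleave ha ha_odd hij, fun k => ⟨fun hk => ?_, fun hk => ?_⟩⟩
  · show Even (a (k / 2) - 1 + k % 2)
    have := Nat.odd_iff.mp (ha_odd (k / 2))
    rw [Nat.even_iff] at hk ⊢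
    omega
  · rw [Nat.odd_iff] at hk
    have h : (k / 2 : ℕ) < s := by have := k.is_lt; omega
    convert ho ⟨k / 2, h⟩ using 1
    ext
    show a (k / 2) - 1 + k % 2 = _
    have := ho_odd ⟨k / 2, h⟩
    rw [ha_of_lt _ h, hk]
    omega

theorem IsOrientHomog.two_mul_card_odd_pos_lt {d n : ℕ} {p : Fin (2 * n + 1) → Fin d → ℝ}
    (hp : IsOrientHomog p) (f : (Fin d → ℝ) →ₗ[ℝ] ℝ) (u : ℝ)
    (heven : ∀ i : Fin (2 * n + 1), Even (i : ℕ) → f (p i) < u) :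
    2 * #{i : Fin (2 * n + 1) | Odd (i : ℕ) ∧ u < f (p i)} < d + 1 := by
  by_contra! hcard
  obtain ⟨m, hm, hpattern⟩ :=
    exists_strictMono_even_odd_pattern {i : Fin (2 * n + 1) | Odd (i : ℕ) ∧ u < f (p i)}
      (fun i hi => (mem_filter.1 hi).2.1) le_rfl
  refine hp.not_forall_neg_one_pow_mul_lt_zero (hm.comp (Fin.strictMono_castLE (by omega))) f u
    fun k => ?_
  rcases Nat.even_or_odd (k : ℕ) with hk | hk
  · rw [hk.neg_one_pow, one_mul, sub_neg]
    exact heven _ ((hpattern _).1 hk)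
  · rw [hk.neg_one_pow, neg_one_mul, neg_lt_zero, sub_pos]
    exact (mem_filter.1 ((hpattern _).2 hk)).2.2

theorem stmt6_general (d s D : ℕ) (hs : s = d / 2 + 1)
    (p : Fin (2 * D + 1) → (Fin d → ℝ)) (hp : IsOrientHomog p)
    (x : Fin d → ℝ) (χ : Fin (2 * D + 1) → Fin s)
    (hx : ∀ j : Fin s,
      x ∈ convexHull ℝ {y | ∃ i : Fin (2 * D + 1), Odd (i : ℕ) ∧ χ i = j ∧ y = p i}) :
    x ∈ convexHull ℝ {y | ∃ i : Fin (2 * D + 1), Even (i : ℕ) ∧ y = p i} := by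
  by_contra hxR
  have hR : {y | ∃ i : Fin (2 * D + 1), Even (i : ℕ) ∧ y = p i}.Finite :=
    (Set.finite_range p).subset fun _ ⟨i, _, hi⟩ => ⟨i, hi.symm⟩
  obtain ⟨f, u, hfR, hux⟩ := geometric_hahn_banach_closed_point (convex_convexHull ℝ _)
    (hR.isClosed_convexHull (𝕜 := ℝ)) hxR
  have hcolour : ∀ j : Fin s, ∃ i : Fin (2 * D + 1), Odd (i : ℕ) ∧ χ i = j ∧ u < f (p i) := by
    intro j
    obtain ⟨_, ⟨i, hi, hχ, rfl⟩, hfi⟩ :=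
      (f.toLinearMap.convexOn convex_univ).exists_ge_of_mem_convexHull (Set.subset_univ _) (hx j)
    exact ⟨i, hi, hχ, hux.trans_le hfi⟩
  choose w hw_odd hw_colour hw_pos using hcolour
  have hcard : s ≤ #{i : Fin (2 * D + 1) | Odd (i : ℕ) ∧ u < f (p i)} :=
    (card_fin s).symm.le.trans <| card_le_card_of_injOn w
      (fun j _ => mem_filter.2 ⟨mem_univ _, hw_odd j, hw_pos j⟩)
      fun a _ b _ hab => by rw [← hw_colour a, ← hw_colour b, hab]
  have hfew : 2 * #{i : Fin (2 * D + 1) | Odd (i : ℕ) ∧ u < f (p i)} < d + 1 :=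
    hp.two_mul_card_odd_pos_lt f.toLinearMap u
      fun i hi => hfR _ (subset_convexHull ℝ _ ⟨i, hi, rfl⟩)
  omega

/-- Let `s = ⌊d/2⌋+1`, `D = (s−1)(d+1)+1`, and let `(p_1, …, p_{2D+1})` be an
orientation-homogeneous sequence in `ℝ^d` (indexed here by `Fin (2D+1)`, so that
`p_k` has index `k−1`). Let `Q` be the points with odd 0-based index (i.e.
`p_2, p_4, …, p_{2D}`) and `R` those with even 0-based index (`p_1, p_3, …, p_{2D+1}`).
Any Tverberg point of `Q` for `s` parts — a point lying in every convex hull of the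
parts of some partition (given by a colouring `χ`) of `Q` into `s` parts — lies in
the convex hull of `R`. -/
theorem stmt6 (d s D : ℕ) (hd : 1 ≤ d) (hs : s = d / 2 + 1) (hD : D = (s - 1) * (d + 1) + 1)
    (p : Fin (2 * D + 1) → (Fin d → ℝ)) (hp : IsOrientHomog p)
    (x : Fin d → ℝ) (χ : Fin (2 * D + 1) → Fin s)
    (hx : ∀ j : Fin s,
      x ∈ convexHull ℝ {y | ∃ i : Fin (2 * D + 1), Odd (i : ℕ) ∧ χ i = j ∧ y = p i}) :
    x ∈ convexHull ℝ {y | ∃ i : Fin (2 * D + 1), Even (i : ℕ) ∧ y = p i} :=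
  stmt6_general d s D hs p hp x χ hx
end

section
/- With the layered construction of Lemma 6 (layers F_k of (D−1)-chains of intervals of length (D−1)^k, for 0 ≤ k ≤ K−1, partitioning [t] with t = m(D−1)^K), for any set J ⊆ [t] of size α·t and for each k, the fraction β_k of chains of layer F_k that contain a point of J satisfies β_k ≥ α + (γ_0 + γ_1 + ⋯ + γ_k)/(D−1), where γ_j is the fraction of chains of F_j that contain a point of J but have at least one interval disjoint from J. -/
/-!
Write `d = D − 1`. The `i`-th chain of layer `k` is exactly the interval `B_{k+1,i}`, and its
`d` intervals are the `B_{k,l}` with `(i−1)d < l ≤ id`. An occupied chain has at most `d`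
occupied intervals, and at most `d − 1` if it is partially occupied; an unoccupied one has
none. Summing over layer `k`, the occupied intervals of layer `k` plus the partially occupied
chains number at most `d` times the occupied chains, i.e. the occupied intervals of layer
`k+1`. Since the occupied intervals of layer `0` are the points of `J`, induction gives
`|J| + ∑_{j ≤ k} d^j P_j ≤ d^{k+1} C_k` for the numbers `C_j`, `P_j` of occupied and partially
occupied chains of layer `j`; dividing by `t = d^{j+1} · #(chains of F_j)` is the claim.
-/

/-- In layer `k` of the construction, the `i`-th chain (for `1 ≤ i`) consists of the
`D−1` intervals `B_{k,(i−1)(D−1)+1}, …, B_{k,i(D−1)}`, where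
`B_{k,l} = [(l−1)(D−1)^k + 1, l(D−1)^k]`; the chain covers
`[(i−1)(D−1)^{k+1} + 1, i(D−1)^{k+1}]`.  The chain is occupied by `J` if `J` meets it. -/
def OccupiedChain (J : Finset ℕ) (D k i : ℕ) : Prop :=
  (J ∩ Finset.Icc ((i - 1) * (D - 1) ^ (k + 1) + 1) (i * (D - 1) ^ (k + 1))).Nonempty

/-- The `i`-th chain of layer `k` is partially occupied by `J` if it is occupied but
some one of its `D−1` intervals is disjoint from `J`. -/
def PartiallyOccupiedChain (J : Finset ℕ) (D k i : ℕ) : Prop :=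
  OccupiedChain J D k i ∧ ∃ j ∈ Finset.Icc 1 (D - 1),
    J ∩ Finset.Icc (((i - 1) * (D - 1) + (j - 1)) * (D - 1) ^ k + 1)
      (((i - 1) * (D - 1) + j) * (D - 1) ^ k) = ∅

open Finset
open scoped Classical

/-- The interval `B_{k,l}` for chains of `d = D − 1` intervals. -/
def block (d k l : ℕ) : Finset ℕ :=
  Icc ((l - 1) * d ^ k + 1) (l * d ^ k)

lemma block_zero (d : ℕ) {l : ℕ} (hl : 1 ≤ l) : block d 0 l = {l} := by
  rw [block, pow_zero, mul_one, mul_one, Nat.sub_add_cancel hl, Icc_self]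

lemma block_subset_block_succ {d k i l : ℕ} (hl : l ∈ Icc ((i - 1) * d + 1) (i * d)) :
    block d k l ⊆ block d (k + 1) i := by
  rw [mem_Icc] at hl
  have hlow : (i - 1) * d ≤ l - 1 := by omega
  apply Icc_subset_Icc
  · calc (i - 1) * d ^ (k + 1) + 1 = (i - 1) * d * d ^ k + 1 := by ring
      _ ≤ (l - 1) * d ^ k + 1 := by gcongr
  · calc l * d ^ k ≤ i * d * d ^ k := by gcongr; exact hl.2
      _ = i * d ^ (k + 1) := by ring

lemma card_Icc_run (d i : ℕ) (hi : 1 ≤ i) : #(Icc ((i - 1) * d + 1) (i * d)) = d := by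
  obtain ⟨i, rfl⟩ := Nat.exists_eq_add_of_le' hi
  rw [Nat.card_Icc, Nat.add_sub_cancel]
  ring_nf
  omega

lemma sum_card_filter_Icc_run (d N : ℕ) (p : ℕ → Prop) [DecidablePred p] :
    ∑ i ∈ Icc 1 N, #{l ∈ Icc ((i - 1) * d + 1) (i * d) | p l}
      = #{l ∈ Icc 1 (N * d) | p l} := by
  induction N with
  | zero => simp
  | succ n ih =>
    have hsplit : Icc 1 ((n + 1) * d) = Icc 1 (n * d) ∪ Icc (n * d + 1) ((n + 1) * d) := by
      ext x; simp only [mem_union, mem_Icc, add_mul, one_mul]; omega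
    rw [sum_Icc_succ_top (by omega), ih, Nat.add_sub_cancel, hsplit, filter_union,
      card_union_of_disjoint]
    refine disjoint_filter_filter (disjoint_left.2 fun x hx hx' => ?_)
    simp only [mem_Icc] at hx hx'
    omega

lemma card_filter_inter_block_zero_nonempty {J : Finset ℕ} {M : ℕ} (hJ : J ⊆ Icc 1 M)
    (d : ℕ) :
    #{l ∈ Icc 1 M | (J ∩ block d 0 l).Nonempty} = #J := by
  rw [filter_congr (q := (· ∈ J)) fun l hl => ?_, filter_mem_eq_inter, inter_eq_right.2 hJ]
  simp [block_zero d (mem_Icc.1 hl).1, Finset.Nonempty]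

lemma ncard_setOf_le_and_le_and (a b : ℕ) (p : ℕ → Prop) :
    {i | a ≤ i ∧ i ≤ b ∧ p i}.ncard = #{i ∈ Icc a b | p i} := by
  rw [← Set.ncard_coe_finset]
  congr 1
  ext i
  simp [and_assoc]

section Chains

variable (J : Finset ℕ) (D : ℕ)

lemma occupiedChain_iff (k i : ℕ) :
    OccupiedChain J D k i ↔ (J ∩ block (D - 1) (k + 1) i).Nonempty :=
  Iff.rfl

variable {J D} in
lemma PartiallyOccupiedChain.exists_block_eq_empty {k i : ℕ} (hi : 1 ≤ i)
    (h : PartiallyOccupiedChain J D k i) :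
    ∃ l ∈ Icc ((i - 1) * (D - 1) + 1) (i * (D - 1)), J ∩ block (D - 1) k l = ∅ := by
  obtain ⟨-, j, hj, hempty⟩ := h
  rw [mem_Icc] at hj
  refine ⟨(i - 1) * (D - 1) + j, ?_, ?_⟩
  · rw [mem_Icc]
    constructor
    · omega
    · calc (i - 1) * (D - 1) + j ≤ (i - 1) * (D - 1) + (D - 1) := by omega
        _ = ((i - 1) + 1) * (D - 1) := by ring
        _ ≤ i * (D - 1) := by gcongr; omega
  · rwa [block, show (i - 1) * (D - 1) + j - 1 = (i - 1) * (D - 1) + (j - 1) by omega]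

lemma card_occupied_blocks_of_chain_add_partial_le (k : ℕ) {i : ℕ} (hi : 1 ≤ i) :
    #{l ∈ Icc ((i - 1) * (D - 1) + 1) (i * (D - 1)) | (J ∩ block (D - 1) k l).Nonempty}
        + (if PartiallyOccupiedChain J D k i then 1 else 0)
      ≤ (D - 1) * (if OccupiedChain J D k i then 1 else 0) := by
  set run := Icc ((i - 1) * (D - 1) + 1) (i * (D - 1))
  have hrun : #run = D - 1 := card_Icc_run (D - 1) i hi
  by_cases hocc : OccupiedChain J D k i
  · by_cases hpar : PartiallyOccupiedChain J D k i
    · obtain ⟨l, hl, hempty⟩ := hpar.exists_block_eq_empty hi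
      have hlt : #{l ∈ run | (J ∩ block (D - 1) k l).Nonempty} < #run :=
        card_lt_card (filter_ssubset.2 ⟨l, hl, by simp [hempty]⟩)
      simp only [if_pos hocc, if_pos hpar]
      omega
    · have hle := card_filter_le run fun l => (J ∩ block (D - 1) k l).Nonempty
      simp only [if_pos hocc, if_neg hpar]
      omega
  · have hnone : #{l ∈ run | (J ∩ block (D - 1) k l).Nonempty} = 0 := by
      refine card_eq_zero.2 (filter_eq_empty_iff.2 fun l hl hne => hocc ?_)
      exact hne.mono (inter_subset_inter_left (block_subset_block_succ hl))
    have hnpar : ¬PartiallyOccupiedChain J D k i := fun h => hocc h.1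
    simp [hnone, hocc, hnpar]

lemma card_occupied_blocks_add_card_partial_le (k N : ℕ) :
    #{l ∈ Icc 1 (N * (D - 1)) | (J ∩ block (D - 1) k l).Nonempty}
        + #{i ∈ Icc 1 N | PartiallyOccupiedChain J D k i}
      ≤ (D - 1) * #{i ∈ Icc 1 N | OccupiedChain J D k i} := by
  rw [← sum_card_filter_Icc_run, card_filter, card_filter, mul_sum, ← sum_add_distrib]
  exact sum_le_sum fun i hi =>
    card_occupied_blocks_of_chain_add_partial_le J D k (mem_Icc.1 hi).1

/-- `N j` is the number of chains of layer `j`. -/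
lemma card_add_sum_pow_mul_card_partial_le (N : ℕ → ℕ) (k : ℕ)
    (hN : ∀ j < k, N j = N (j + 1) * (D - 1)) (hJ : J ⊆ Icc 1 (N 0 * (D - 1))) :
    #J + ∑ j ∈ range (k + 1),
        (D - 1) ^ j * #{i ∈ Icc 1 (N j) | PartiallyOccupiedChain J D j i}
      ≤ (D - 1) ^ (k + 1) * #{i ∈ Icc 1 (N k) | OccupiedChain J D k i} := by
  induction k with
  | zero =>
    simpa [card_filter_inter_block_zero_nonempty hJ] using
      card_occupied_blocks_add_card_partial_le J D 0 (N 0)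
  | succ k ih =>
    have hlayer := card_occupied_blocks_add_card_partial_le J D (k + 1) (N (k + 1))
    simp only [← occupiedChain_iff, ← hN k k.lt_succ_self] at hlayer
    rw [sum_range_succ, ← add_assoc]
    calc _ ≤ (D - 1) ^ (k + 1) * #{i ∈ Icc 1 (N k) | OccupiedChain J D k i}
            + (D - 1) ^ (k + 1)
              * #{i ∈ Icc 1 (N (k + 1)) | PartiallyOccupiedChain J D (k + 1) i} :=
          Nat.add_le_add_right (ih fun j hj => hN j (by omega)) _
      _ ≤ (D - 1) ^ (k + 1)
            * ((D - 1) * #{i ∈ Icc 1 (N (k + 1)) | OccupiedChain J D (k + 1) i}) := by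
          rw [← mul_add]; gcongr
      _ = _ := by ring

end Chains

lemma div_cast_eq_pow_mul_div {n d t j : ℕ} (h : t = n * d ^ j) (hd : d ≠ 0) (x : ℝ) :
    x / n = d ^ j * x / t := by
  rw [h, Nat.cast_mul, Nat.cast_pow, mul_comm (n : ℝ), mul_div_mul_left]
  exact pow_ne_zero _ (Nat.cast_ne_zero.2 hd)

/-- With the layered construction on `[t]`, `t = m(D−1)^K` (layer `k` having
`t/(D−1)^{k+1} = m(D−1)^{K−1−k}` chains of `D−1` intervals of length `(D−1)^k` each),
for any `J ⊆ [t]` of size `α·t` and each `k < K`, the fraction `β_k` of occupied chains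
of layer `k` satisfies `β_k ≥ α + (γ_0 + ⋯ + γ_k)/(D−1)`, where `γ_j` is the fraction
of partially occupied chains of layer `j`. -/
theorem stmt9 (D K m t : ℕ) (hD : 2 ≤ D) (hm : 1 ≤ m) (ht : t = m * (D - 1) ^ K)
    (J : Finset ℕ) (hJ : J ⊆ Finset.Icc 1 t) (α : ℝ) (hα : (J.card : ℝ) = α * t) :
    ∀ k < K,
      ({i : ℕ | 1 ≤ i ∧ i ≤ m * (D - 1) ^ (K - 1 - k) ∧ OccupiedChain J D k i}.ncard : ℝ)
          / (m * (D - 1) ^ (K - 1 - k) : ℕ)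
        ≥ α + (∑ j ∈ Finset.range (k + 1),
            ({i : ℕ | 1 ≤ i ∧ i ≤ m * (D - 1) ^ (K - 1 - j) ∧
                PartiallyOccupiedChain J D j i}.ncard : ℝ)
              / (m * (D - 1) ^ (K - 1 - j) : ℕ)) / ((D : ℝ) - 1) := by
  intro k hk
  have hd : D - 1 ≠ 0 := by omega
  have hchains : ∀ j ≤ k, t = m * (D - 1) ^ (K - 1 - j) * (D - 1) ^ (j + 1) := by
    intro j hj
    rw [ht, mul_assoc, ← pow_add]; congr 2; omega
  have key := card_add_sum_pow_mul_card_partial_le J D (fun j => m * (D - 1) ^ (K - 1 - j)) k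
    (fun j hj => by rw [mul_assoc, ← pow_succ]; congr 2; omega)
    (by rwa [hchains 0 k.zero_le, Nat.sub_zero, zero_add, pow_one] at hJ)
  have htpos : (0 : ℝ) < t := by rw [ht]; positivity
  have hpartial : ∀ j ∈ range (k + 1),
      (#{i ∈ Icc 1 (m * (D - 1) ^ (K - 1 - j)) | PartiallyOccupiedChain J D j i} : ℝ)
          / (m * (D - 1) ^ (K - 1 - j) : ℕ) / ((D - 1 : ℕ) : ℝ)
        = (((D - 1) ^ j * #{i ∈ Icc 1 (m * (D - 1) ^ (K - 1 - j)) |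
            PartiallyOccupiedChain J D j i} : ℕ) : ℝ) / t := fun j hj => by
    rw [div_cast_eq_pow_mul_div (hchains j (by simpa [Nat.lt_succ_iff] using hj)) hd]
    field_simp
    push_cast
    ring
  simp only [ncard_setOf_le_and_le_and, ← Nat.cast_pred (by omega : 0 < D)]
  rw [div_cast_eq_pow_mul_div (hchains k le_rfl) hd, sum_div, sum_congr rfl hpartial,
    eq_div_of_mul_eq htpos.ne' hα.symm, ← sum_div, ← add_div, ge_iff_le,
    div_le_div_iff_of_pos_right htpos]
  exact_mod_cast key
end

section
/- Let P ⊂ ℝ^d be finite and suppose for a sequence t_i → 0 of positive reals there are point sets A(t_i), all of the same finite cardinality N and all contained in a fixed compact set, such that each A(t_i) is a one-sided weak ε-approximant for a perturbed set P(t_i), where P(t_i) → P pointwise. If A(t_i) converges (as a multiset, pointwise) to a multiset A, then A is a one-sided weak ε-approximant for P with respect to convex sets. -/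
/-!
Fix a convex `C`. The hull `K` of the points `p₀ j ∈ C` is a compact convex subset of `C`, and
only finitely many `a₀ j` lie outside `C`. A small open thickening `D` of `K` is convex and its
closure still misses every `a₀ j ∉ C`. For late `i`, each `p j i` with `p₀ j ∈ C` lies in `D` and
each `a j i ∈ D` has `a₀ j ∈ C`, so the approximation property of `A i` tested on `D` bounds the
deficiency of `A` on `C`.
-/

open Filter Topology Metric

theorem IsCompact.exists_isOpen_convex_closure_subset {E : Type*} [SeminormedAddCommGroup E]
    [NormedSpace ℝ E] {K U : Set E} (hK : IsCompact K) (hKconv : Convex ℝ K) (hU : IsOpen U)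
    (hKU : K ⊆ U) : ∃ D : Set E, IsOpen D ∧ Convex ℝ D ∧ K ⊆ D ∧ closure D ⊆ U := by
  obtain ⟨δ, hδ, hδU⟩ := hK.exists_cthickening_subset_open hU hKU
  exact ⟨thickening δ K, isOpen_thickening, hKconv.thickening δ, self_subset_thickening hδ K,
    (closure_thickening_subset_cthickening δ K).trans hδU⟩

section Convergence

variable {ι α X : Type*} [Finite ι] [TopologicalSpace X] {l : Filter α}
  {x : ι → α → X} {x₀ : ι → X}

theorem eventually_setOf_mem_subset_of_isOpen (hx : ∀ j, Tendsto (x j) l (𝓝 (x₀ j)))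
    {U : Set X} (hU : IsOpen U) : ∀ᶠ i in l, {j | x₀ j ∈ U} ⊆ {j | x j i ∈ U} := by
  simp only [Set.ofPred_subset_ofPred]
  exact eventually_all.2 fun j ↦
    eventually_imp_distrib_left.2 fun hj ↦ (hx j).eventually (hU.mem_nhds hj)

theorem eventually_setOf_mem_subset_closure (hx : ∀ j, Tendsto (x j) l (𝓝 (x₀ j)))
    (D : Set X) : ∀ᶠ i in l, {j | x j i ∈ D} ⊆ {j | x₀ j ∈ closure D} := by
  simp only [Set.ofPred_subset_ofPred]
  refine eventually_all.2 fun j ↦ ?_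
  by_cases hj : x₀ j ∈ closure D
  · exact .of_forall fun _ _ ↦ hj
  · filter_upwards [(hx j).eventually (isClosed_closure.isOpen_compl.mem_nhds hj)] with i hi hiD
    exact absurd (subset_closure hiD) hi

end Convergence

theorem stmt16_general (d n N : ℕ) (ε : ℝ)
    (p : Fin n → ℕ → (Fin d → ℝ)) (p₀ : Fin n → (Fin d → ℝ))
    (hpconv : ∀ j : Fin n, Filter.Tendsto (fun i => p j i) Filter.atTop (nhds (p₀ j)))
    (a : Fin N → ℕ → (Fin d → ℝ)) (a₀ : Fin N → (Fin d → ℝ))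
    (haconv : ∀ j : Fin N, Filter.Tendsto (fun i => a j i) Filter.atTop (nhds (a₀ j)))
    (happrox : ∀ i : ℕ, ∀ C : Set (Fin d → ℝ), Convex ℝ C →
      ({j : Fin n | p j i ∈ C}.ncard : ℝ) / n
        - ({j : Fin N | a j i ∈ C}.ncard : ℝ) / N ≤ ε) :
    ∀ C : Set (Fin d → ℝ), Convex ℝ C →
      ({j : Fin n | p₀ j ∈ C}.ncard : ℝ) / n
        - ({j : Fin N | a₀ j ∈ C}.ncard : ℝ) / N ≤ ε := by
  intro C hC
  set K := convexHull ℝ (p₀ '' {j | p₀ j ∈ C})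
  have hKC : K ⊆ C := convexHull_min (Set.image_subset_iff.2 fun _ hj ↦ hj) hC
  have hU : IsOpen (Set.range a₀ \ C)ᶜ := ((Set.finite_range a₀).sdiff).isClosed.isOpen_compl
  obtain ⟨D, hDopen, hDconv, hKD, hDU⟩ :=
    ((Set.toFinite _).isCompact_convexHull (𝕜 := ℝ)).exists_isOpen_convex_closure_subset
      (convex_convexHull ℝ _) hU fun x hx ⟨_, hxC⟩ ↦ hxC (hKC hx)
  obtain ⟨i, hpi, hai⟩ := ((eventually_setOf_mem_subset_of_isOpen hpconv hDopen).and
    (eventually_setOf_mem_subset_closure haconv D)).exists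
  have hpD : {j | p₀ j ∈ C} ⊆ {j | p j i ∈ D} :=
    fun j hj ↦ hpi (hKD (subset_convexHull ℝ _ ⟨j, hj, rfl⟩))
  have haC : {j | a j i ∈ D} ⊆ {j | a₀ j ∈ C} := fun j hj ↦
    not_not.1 fun hjC ↦ hDU (hai hj) ⟨⟨j, rfl⟩, hjC⟩
  calc ({j | p₀ j ∈ C}.ncard : ℝ) / n - ({j | a₀ j ∈ C}.ncard : ℝ) / N
      ≤ ({j | p j i ∈ D}.ncard : ℝ) / n - ({j | a j i ∈ D}.ncard : ℝ) / N := by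
        gcongr <;> apply Set.toFinite
    _ ≤ ε := happrox i D hDconv

/-- Let `P = {p₀ 1, …, p₀ n} ⊂ ℝ^d` (the `p₀ j` distinct) and suppose that along a
sequence (indexed by `i : ℕ`) there are perturbed point sets `P i = (p j i)_j` with
`p j i → p₀ j`, and multisets `A i = (a j i)_j` of fixed size `N`, all contained in a
fixed compact set, such that each `A i` is a one-sided weak ε-approximant for `P i`
with respect to convex sets. If `a j i → a₀ j` for each `j`, then the limit multiset
`A = (a₀ j)_j` is a one-sided weak ε-approximant for `P` with respect to convex sets. -/
theorem stmt16 (d n N : ℕ) (hn : 0 < n) (hN : 0 < N) (ε : ℝ)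
    (p : Fin n → ℕ → (Fin d → ℝ)) (p₀ : Fin n → (Fin d → ℝ))
    (hp₀ : Function.Injective p₀)
    (hpconv : ∀ j : Fin n, Filter.Tendsto (fun i => p j i) Filter.atTop (nhds (p₀ j)))
    (a : Fin N → ℕ → (Fin d → ℝ)) (a₀ : Fin N → (Fin d → ℝ))
    (hcompact : ∃ Kc : Set (Fin d → ℝ), IsCompact Kc ∧ ∀ (j : Fin N) (i : ℕ), a j i ∈ Kc)
    (haconv : ∀ j : Fin N, Filter.Tendsto (fun i => a j i) Filter.atTop (nhds (a₀ j)))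
    (happrox : ∀ i : ℕ, ∀ C : Set (Fin d → ℝ), Convex ℝ C →
      ({j : Fin n | p j i ∈ C}.ncard : ℝ) / n
        - ({j : Fin N | a j i ∈ C}.ncard : ℝ) / N ≤ ε) :
    ∀ C : Set (Fin d → ℝ), Convex ℝ C →
      ({j : Fin n | p₀ j ∈ C}.ncard : ℝ) / n
        - ({j : Fin N | a₀ j ∈ C}.ncard : ℝ) / N ≤ ε :=
  stmt16_general d n N ε p p₀ hpconv a a₀ haconv happrox
end
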